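/- Let B⁺ and B⁻ be independent standard Brownian motions, define the two-sided Brownian motion B_t = B⁺_t for t ≥ 0 and B_t = B⁻_{−t} for t < 0, and set M_t = exp(B_t − t/2). For λ > 0 and −λ ≤ t ≤ t' ≤ λ let 𝒢^{(λ)}(t,t') = (M_t M_{t'}/(M_λ − M_{−λ})²)·( M_λ² ∫_{t'}^{λ} M_s^{−2} ds + M_λ M_{−λ} ∫_t^{t'} M_s^{−2} ds + M_{−λ}² ∫_{−λ}^{t} M_s^{−2} ds ). Then: (1) almost surely, ∫_{−∞}^{t} M_s^{−2} ds < ∞ for every t ∈ ℝ, so that 𝒢^{(∞)}(t,t') := M_t M_{t'} ∫_{−∞}^{min(t,t')} M_s^{−2} ds is well defined; (2) for every T > 0, almost surely sup_{−T ≤ t ≤ t' ≤ T} | 𝒢^{(λ)}(t,t') − 𝒢^{(∞)}(t,t') | → 0 as λ → ∞. -/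

import Mathlib

open MeasureTheory ProbabilityTheory Real

/-- `B` is a standard Brownian motion on `[0,∞)` under `P`. -/
def IsStdBrownian {Ω : Type*} [MeasurableSpace Ω] (P : Measure Ω) (B : ℝ → Ω → ℝ) : Prop :=
  (∀ t : ℝ, Measurable (B t)) ∧
  (∀ᵐ ω ∂P, B 0 ω = 0) ∧
  (∀ ω, ContinuousOn (fun t => B t ω) (Set.Ici 0)) ∧
  (∀ (n : ℕ) (t : Fin (n + 1) → ℝ), (∀ i, 0 ≤ t i) → Monotone t →
    iIndepFun
      (fun (i : Fin n) (ω : Ω) => B (t i.succ) ω - B (t i.castSucc) ω) P) ∧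
  (∀ s t : ℝ, 0 ≤ s → s ≤ t →
    Measure.map (fun ω => B t ω - B s ω) P = gaussianReal 0 (Real.toNNReal (t - s)))

/-- The two-sided Brownian motion built from two one-sided Brownian motions. -/
noncomputable def twoSidedBM {Ω : Type*} (Bp Bm : ℝ → Ω → ℝ) (t : ℝ) (ω : Ω) : ℝ :=
  if 0 ≤ t then Bp t ω else Bm (-t) ω

/-- The geometric Brownian motion `M_t = exp(B_t - t/2)` driven by the two-sided
Brownian motion. -/
noncomputable def gBM {Ω : Type*} (Bp Bm : ℝ → Ω → ℝ) (t : ℝ) (ω : Ω) : ℝ :=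
  Real.exp (twoSidedBM Bp Bm t ω - t / 2)

/-- The finite-volume kernel `𝒢^{(λ)}(t,t')` (for `-λ ≤ t ≤ t' ≤ λ`). -/
noncomputable def Gker {Ω : Type*} (Bp Bm : ℝ → Ω → ℝ) (lam t t' : ℝ) (ω : Ω) : ℝ :=
  (gBM Bp Bm t ω * gBM Bp Bm t' ω / (gBM Bp Bm lam ω - gBM Bp Bm (-lam) ω) ^ 2) *
    ((gBM Bp Bm lam ω) ^ 2 * (∫ s in t'..lam, 1 / (gBM Bp Bm s ω) ^ 2) +
     gBM Bp Bm lam ω * gBM Bp Bm (-lam) ω * (∫ s in t..t', 1 / (gBM Bp Bm s ω) ^ 2) +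
     (gBM Bp Bm (-lam) ω) ^ 2 * (∫ s in (-lam)..t, 1 / (gBM Bp Bm s ω) ^ 2))

/-- The infinite-volume kernel `𝒢^{(∞)}(t,t')`. -/
noncomputable def GkerInf {Ω : Type*} (Bp Bm : ℝ → Ω → ℝ) (t t' : ℝ) (ω : Ω) : ℝ :=
  gBM Bp Bm t ω * gBM Bp Bm t' ω * ∫ s in Set.Iic (min t t'), 1 / (gBM Bp Bm s ω) ^ 2

open Set Filter
open scoped NNReal ENNReal

lemma exp_neg_le_pow6 {x : ℝ} (hx : 0 < x) : rexp (-x) ≤ (6 / x) ^ 6 := by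
  have h1 : x / 6 ≤ rexp (x / 6) := (Real.add_one_le_exp (x / 6)).trans' (by linarith)
  have h2 : (x / 6) ^ 6 ≤ rexp (x / 6) ^ 6 := by
    apply pow_le_pow_left₀ (by positivity) h1
  rw [← Real.exp_nat_mul] at h2
  have h3 : rexp (-x) * (x/6)^6 ≤ rexp (-x) * rexp ((6:ℕ) * (x/6)) :=
    mul_le_mul_of_nonneg_left h2 (exp_nonneg _)
  rw [← Real.exp_add] at h3
  have he : -x + (6:ℕ) * (x/6) = 0 := by push_cast; ring
  rw [he, Real.exp_zero] at h3
  rw [div_pow, le_div_iff₀ (by positivity)]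
  calc rexp (-x) * x ^ 6 = rexp (-x) * (x/6)^6 * 6^6 := by
        rw [div_pow]; field_simp
    _ ≤ 1 * 6^6 := mul_le_mul_of_nonneg_right h3 (by norm_num)
    _ = 6 ^ 6 := by norm_num

lemma integral_exp_neg_mul_Ioi {β : ℝ} (hβ : 0 < β) (c : ℝ) :
    ∫ x in Ioi c, rexp (-(β * x)) = rexp (-(β * c)) / β := by
  have h := integral_comp_mul_left_Ioi (fun y => rexp (-y)) c hβ
  simp only [smul_eq_mul] at h
  rw [show ∫ x in Ioi c, rexp (-(β * x)) = ∫ x in Ioi c, (fun y => rexp (-y)) (β * x) from rfl, h,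
    integral_exp_neg_Ioi]
  field_simp

lemma integrableOn_exp_neg_mul_Ioi {β : ℝ} (hβ : 0 < β) (c : ℝ) :
    IntegrableOn (fun x => rexp (-(β * x))) (Ioi c) := by
  simpa [neg_mul] using exp_neg_integrableOn_Ioi c hβ

lemma gauss_onesided (v : ℝ≥0) (hv : v ≠ 0) {a : ℝ} (ha : 0 < a) :
    ∫ x in Ioi a, gaussianPDFReal 0 v x ≤ Real.sqrt v / a * rexp (-a ^ 2 / (2 * v)) := by
  have hv' : (0:ℝ) < v := lt_of_le_of_ne v.coe_nonneg (by exact_mod_cast hv.symm)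
  have hpdf : ∀ x : ℝ, x ∈ Ioi a → gaussianPDFReal 0 v x ≤
      (Real.sqrt (2 * π * v))⁻¹ * rexp (-a ^ 2 / (2 * v)) * rexp (-((a / v) * (x - a))) := by
    intro x hx
    rw [gaussianPDFReal]
    have hsplit : (Real.sqrt (2 * π * v))⁻¹ * rexp (-a ^ 2 / (2 * v)) * rexp (-((a / v) * (x - a)))
        = (Real.sqrt (2 * π * v))⁻¹ * rexp (-a ^ 2 / (2 * v) + -((a / v) * (x - a))) := by
      rw [Real.exp_add]; ring
    rw [hsplit]
    apply mul_le_mul_of_nonneg_left _ (by positivity)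
    apply Real.exp_le_exp.2
    have hd : -a ^ 2 / (2 * (v:ℝ)) + -((a / v) * (x - a)) - (-(x - 0) ^ 2 / (2 * v))
        = (x - a)^2 / (2*v) := by
      field_simp
      ring
    nlinarith [sq_nonneg (x - a), div_nonneg (sq_nonneg (x-a)) (le_of_lt (by positivity : (0:ℝ) < 2*(v:ℝ)))]
  have hint : IntegrableOn (fun x => (Real.sqrt (2 * π * v))⁻¹ * rexp (-a ^ 2 / (2 * v)) *
      rexp (-((a / v) * (x - a)))) (Ioi a) := by
    have h1 : IntegrableOn (fun x => rexp ((a/v)*a) * rexp (-((a / v) * x))) (Ioi a) :=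
      (integrableOn_exp_neg_mul_Ioi (by positivity) a).const_mul _
    apply IntegrableOn.congr_fun (h1.const_mul ((Real.sqrt (2 * π * v))⁻¹
      * rexp (-a ^ 2 / (2 * v)))) _ measurableSet_Ioi
    intro x _
    simp only [← Real.exp_add]
    ring_nf
  have hmono := setIntegral_mono_on
    ((integrable_gaussianPDFReal 0 v).integrableOn) hint measurableSet_Ioi hpdf
  refine hmono.trans ?_
  rw [integral_const_mul]
  have hval : ∫ x in Ioi a, rexp (-((a / v) * (x - a))) = v / a := by
    have hthis : ∀ x : ℝ, rexp (-((a / v) * (x - a))) = rexp ((a/v)*a) * rexp (-((a/v)*x)) := by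
      intro x; rw [← Real.exp_add]; ring_nf
    rw [setIntegral_congr_fun measurableSet_Ioi (fun x _ => hthis x), integral_const_mul,
      integral_exp_neg_mul_Ioi (by positivity : (0:ℝ) < a/v) a, Real.exp_neg]
    field_simp
  rw [hval]
  have h2πv : Real.sqrt (2 * π * v) = Real.sqrt (2*π) * Real.sqrt v := by
    rw [← Real.sqrt_mul (by positivity)]
  have core : (v:ℝ) * (Real.sqrt (2*π*(v:ℝ)))⁻¹ ≤ Real.sqrt v := by
    rw [← div_eq_mul_inv, div_le_iff₀ (by positivity : (0:ℝ) < Real.sqrt (2*π*(v:ℝ)))]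
    have h1 : ((v:ℝ))^2 ≤ 2*π*((v:ℝ)^2) := by nlinarith [Real.pi_gt_three, sq_nonneg (v:ℝ)]
    calc (v:ℝ) = Real.sqrt ((v:ℝ)^2) := (Real.sqrt_sq v.coe_nonneg).symm
      _ ≤ Real.sqrt (2*π*((v:ℝ)^2)) := Real.sqrt_le_sqrt h1
      _ = Real.sqrt (v:ℝ) * Real.sqrt (2*π*(v:ℝ)) := by
          rw [← Real.sqrt_mul v.coe_nonneg]; ring_nf
  calc (Real.sqrt (2 * π * ↑v))⁻¹ * rexp (-a ^ 2 / (2 * ↑v)) * (↑v / a)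
      = ((v:ℝ) * (Real.sqrt (2*π*(v:ℝ)))⁻¹) / a * rexp (-a ^ 2 / (2 * ↑v)) := by ring
    _ ≤ Real.sqrt v / a * rexp (-a ^ 2 / (2 * v)) := by
        gcongr

lemma gauss_tail (v : ℝ≥0) {a : ℝ} (ha : 0 < a) :
    gaussianReal 0 v {x | a ≤ |x|}
      ≤ ENNReal.ofReal (2 * (Real.sqrt v / a) * rexp (-a ^ 2 / (2 * v))) := by
  have hsets : MeasurableSet {x : ℝ | a ≤ |x|} :=
    measurableSet_le measurable_const measurable_abs
  by_cases hv : v = 0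
  · subst hv
    rw [gaussianReal_zero_var, Measure.dirac_apply' _ hsets,
      Set.indicator_of_notMem (by simp [abs_of_nonneg, not_le]; linarith)]
    exact zero_le
  · rw [gaussianReal_apply_eq_integral 0 hv]
    apply ENNReal.ofReal_le_ofReal
    have hset : {x : ℝ | a ≤ |x|} = Iic (-a) ∪ Ici a := by
      ext x
      simp only [mem_setOf_eq, mem_union, mem_Iic, mem_Ici, le_abs, le_neg]
      tauto
    have hint : Integrable (gaussianPDFReal 0 v) := integrable_gaussianPDFReal 0 v
    have hsym : ∀ x : ℝ, gaussianPDFReal 0 v (-x) = gaussianPDFReal 0 v x := by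
      intro x; simp [gaussianPDFReal, neg_sq]
    have hIic : ∫ x in Iic (-a), gaussianPDFReal 0 v x = ∫ x in Ioi a, gaussianPDFReal 0 v x := by
      have h := integral_comp_neg_Iic (-a) (gaussianPDFReal 0 v)
      rw [neg_neg] at h
      rw [← h]
      exact setIntegral_congr_fun measurableSet_Iic (fun x _ => (hsym x).symm)
    have hIci : ∫ x in Ici a, gaussianPDFReal 0 v x = ∫ x in Ioi a, gaussianPDFReal 0 v x :=
      integral_Ici_eq_integral_Ioi
    rw [hset, setIntegral_union (Iic_disjoint_Ici.2 (by linarith)) measurableSet_Ici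
      hint.integrableOn hint.integrableOn, hIic, hIci]
    have := gauss_onesided v hv ha
    linarith


lemma incr_tail {Ω : Type*} [MeasurableSpace Ω] (P : Measure Ω) (B : ℝ → Ω → ℝ)
    (hB : IsStdBrownian P B) {s t a : ℝ} (hs : 0 ≤ s) (hst : s ≤ t) (ha : 0 < a) :
    P {ω | a ≤ |B t ω - B s ω|}
      ≤ ENNReal.ofReal (2 * (Real.sqrt (t - s) / a) * rexp (-a ^ 2 / (2 * (t - s)))) := by
  have hmeas : Measurable fun ω => B t ω - B s ω := (hB.1 t).sub (hB.1 s)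
  have hsets : MeasurableSet {x : ℝ | a ≤ |x|} :=
    measurableSet_le measurable_const measurable_abs
  have heq : {ω | a ≤ |B t ω - B s ω|} = (fun ω => B t ω - B s ω) ⁻¹' {x | a ≤ |x|} := rfl
  rw [heq, ← Measure.map_apply hmeas hsets, hB.2.2.2.2 s t hs hst]
  have hcast : ((Real.toNNReal (t - s)) : ℝ) = t - s := Real.coe_toNNReal _ (by linarith)
  have := gauss_tail (Real.toNNReal (t - s)) ha
  rwa [hcast] at this

lemma geom_partial_sum_le {c : ℝ} (h0 : 0 ≤ c) (h1 : c < 1) (n : ℕ) :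
    ∑ j ∈ Finset.range n, c ^ j ≤ (1 - c)⁻¹ := by
  have hc1 : c ≠ 1 := ne_of_lt h1
  rw [geom_sum_eq hc1]
  have h2 : (c ^ n - 1) / (c - 1) = (1 - c ^ n) / (1 - c) := by
    rw [div_eq_div_iff (by linarith) (by linarith)]
    ring
  rw [h2, ← one_div]
  apply div_le_div₀ (by norm_num) _ (by linarith) le_rfl
  have := pow_nonneg h0 n
  linarith

lemma path_bound (f : ℝ → ℝ) (hcont : ContinuousOn f (Ici 0)) (h0 : f 0 = 0) (N : ℕ)
    (hgrid : ∀ n : ℕ, N ≤ n → |f n - f 0| < ((n : ℝ) + 1) / 16)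
    (hosc : ∀ n : ℕ, N ≤ n → ∀ k : ℕ, ∀ i : ℕ, i < 2 ^ k →
      |f ((n : ℝ) + ((i : ℝ) + 1) / 2 ^ k) - f ((n : ℝ) + (i : ℝ) / 2 ^ k)|
        < ((n : ℝ) + 1) * (6 / 7) ^ k / 112) :
    ∃ C : ℝ, 0 ≤ C ∧ ∀ u : ℝ, 0 ≤ u → |f u| ≤ u / 8 + C := by
  -- dyadic estimate
  have dyad : ∀ n : ℕ, N ≤ n → ∀ k : ℕ, ∀ i : ℕ, i ≤ 2 ^ k →
      |f ((n : ℝ) + (i : ℝ) / 2 ^ k) - f (n : ℝ)|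
        ≤ ((n : ℝ) + 1) / 112 * ∑ j ∈ Finset.range (k + 1), (6 / 7 : ℝ) ^ j := by
    intro n hn k
    induction k with
    | zero =>
      intro i hi
      interval_cases i
      · simp
        positivity
      · have h := hosc n hn 0 0 (by norm_num)
        simp only [Nat.cast_zero, pow_zero, zero_div, add_zero, div_one, zero_add] at h ⊢
        rw [Finset.sum_range_one, pow_zero]
        linarith [h]
    | succ k ih =>
      intro i hi
      have h2p : (2 : ℕ) ^ (k + 1) = 2 * 2 ^ k := by ring
      rcases Nat.even_or_odd i with ⟨m, hm⟩ | ⟨m, hm⟩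
      · -- even, i = m + m
        have hm2 : m ≤ 2 ^ k := by omega
        have hcast : ((i : ℝ)) / 2 ^ (k + 1) = (m : ℝ) / 2 ^ k := by
          subst hm
          push_cast
          field_simp
          ring
        rw [hcast]
        refine (ih m hm2).trans ?_
        apply mul_le_mul_of_nonneg_left _ (by positivity)
        apply Finset.sum_le_sum_of_subset_of_nonneg
        · exact Finset.range_subset_range.2 (by omega)
        · intro j _ _; positivity
      · -- odd, i = 2m+1
        have hmlt : m < 2 ^ k := by omega
        have h2m : 2 * m < 2 ^ (k + 1) := by omega
        have hstep := hosc n hn (k + 1) (2 * m) h2m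
        have hceq : ((2 * m : ℕ) : ℝ) / 2 ^ (k + 1) = (m : ℝ) / 2 ^ k := by
          push_cast
          field_simp
          ring
        have hieq : ((i : ℝ)) = ((2 * m : ℕ) : ℝ) + 1 := by
          subst hm; push_cast; ring
        have tri : |f ((n : ℝ) + (i : ℝ) / 2 ^ (k + 1)) - f (n : ℝ)|
            ≤ |f ((n : ℝ) + (((2 * m : ℕ) : ℝ) + 1) / 2 ^ (k + 1))
                - f ((n : ℝ) + ((2 * m : ℕ) : ℝ) / 2 ^ (k + 1))|
              + |f ((n : ℝ) + ((2 * m : ℕ) : ℝ) / 2 ^ (k + 1)) - f (n : ℝ)| := by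
          rw [hieq]
          exact abs_sub_le _ _ _
        refine tri.trans ?_
        have hIH := ih m hmlt.le
        rw [hceq] at hstep ⊢
        rw [Finset.sum_range_succ]
        have hs := hstep.le
        calc |f ((n : ℝ) + (((2 * m : ℕ) : ℝ) + 1) / 2 ^ (k + 1)) - f ((n : ℝ) + (m : ℝ) / 2 ^ k)|
              + |f ((n : ℝ) + (m : ℝ) / 2 ^ k) - f (n : ℝ)|
            ≤ ((n : ℝ) + 1) * (6 / 7) ^ (k + 1) / 112
              + ((n : ℝ) + 1) / 112 * ∑ j ∈ Finset.range (k + 1), (6 / 7 : ℝ) ^ j := by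
              exact add_le_add hs hIH
          _ = ((n : ℝ) + 1) / 112 *
              (∑ j ∈ Finset.range (k + 1), (6 / 7 : ℝ) ^ j + (6 / 7) ^ (k + 1)) := by ring
  have sumbd : ∀ n k : ℕ, ((n : ℝ) + 1) / 112 * ∑ j ∈ Finset.range (k + 1), (6 / 7 : ℝ) ^ j
      ≤ ((n : ℝ) + 1) / 16 := by
    intro n k
    have h7 : ((1 : ℝ) - 6 / 7)⁻¹ = 7 := by norm_num
    have := geom_partial_sum_le (by norm_num : (0:ℝ) ≤ 6/7) (by norm_num) (k + 1)
    rw [h7] at this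
    have hnn : (0:ℝ) ≤ ((n : ℝ) + 1) / 112 := by positivity
    calc ((n : ℝ) + 1) / 112 * ∑ j ∈ Finset.range (k + 1), (6 / 7 : ℝ) ^ j
        ≤ ((n : ℝ) + 1) / 112 * 7 := mul_le_mul_of_nonneg_left this hnn
      _ = ((n : ℝ) + 1) / 16 := by ring
  have blockosc : ∀ n : ℕ, N ≤ n → ∀ u : ℝ, (n : ℝ) ≤ u → u ≤ (n : ℝ) + 1 →
      |f u - f (n : ℝ)| ≤ ((n : ℝ) + 1) / 16 := by
    intro n hn u hu1 hu2
    set x : ℕ → ℝ := fun k => (n : ℝ) + (⌊(u - n) * 2 ^ k⌋₊ : ℝ) / 2 ^ k with hxdef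
    have hun : 0 ≤ u - n := by linarith
    have h2k : ∀ k : ℕ, (0:ℝ) < 2 ^ k := fun k => by positivity
    have hfl : ∀ k : ℕ, (⌊(u - n) * 2 ^ k⌋₊ : ℝ) ≤ (u - n) * 2 ^ k :=
      fun k => Nat.floor_le (by positivity)
    have hfl2 : ∀ k : ℕ, (u - n) * 2 ^ k < (⌊(u - n) * 2 ^ k⌋₊ : ℝ) + 1 :=
      fun k => Nat.lt_floor_add_one _
    have hile : ∀ k : ℕ, ⌊(u - n) * 2 ^ k⌋₊ ≤ 2 ^ k := by
      intro k
      have h1 : (u - n) * 2 ^ k ≤ ((2 ^ k : ℕ) : ℝ) := by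
        push_cast
        nlinarith [h2k k]
      have h2 := Nat.floor_mono h1
      rwa [Nat.floor_natCast] at h2
    have hxle : ∀ k, x k ≤ u := by
      intro k
      show (n : ℝ) + (⌊(u - n) * 2 ^ k⌋₊ : ℝ) / 2 ^ k ≤ u
      rw [← le_sub_iff_add_le', div_le_iff₀ (h2k k)]
      exact hfl k
    have hxgt : ∀ k, u - (1 / 2) ^ k ≤ x k := by
      intro k
      show u - (1 / 2) ^ k ≤ (n : ℝ) + (⌊(u - n) * 2 ^ k⌋₊ : ℝ) / 2 ^ k
      have hsplit : ((1:ℝ) / 2) ^ k = 1 / 2 ^ k := by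
        rw [div_pow, one_pow]
      have h3 : u - n ≤ ((⌊(u - n) * 2 ^ k⌋₊ : ℝ) + 1) / 2 ^ k := by
        rw [le_div_iff₀ (h2k k)]
        exact (hfl2 k).le
      rw [add_div] at h3
      rw [hsplit]
      linarith
    have hxtend : Tendsto x atTop (nhds u) := by
      have hhalf : Tendsto (fun k : ℕ => ((1:ℝ) / 2) ^ k) atTop (nhds 0) :=
        tendsto_pow_atTop_nhds_zero_of_lt_one (by norm_num) (by norm_num)
      have hlow : Tendsto (fun k : ℕ => u - ((1:ℝ) / 2) ^ k) atTop (nhds u) := by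
        simpa using tendsto_const_nhds.sub hhalf
      exact tendsto_of_tendsto_of_tendsto_of_le_of_le hlow tendsto_const_nhds hxgt hxle
    have hx0 : ∀ k, x k ∈ Ici (0:ℝ) := by
      intro k
      have : (0:ℝ) ≤ (⌊(u - n) * 2 ^ k⌋₊ : ℝ) / 2 ^ k := by positivity
      have hn0 : (0:ℝ) ≤ (n:ℝ) := Nat.cast_nonneg n
      simp only [mem_Ici]
      show (0:ℝ) ≤ (n : ℝ) + (⌊(u - n) * 2 ^ k⌋₊ : ℝ) / 2 ^ k
      linarith
    have hu0 : u ∈ Ici (0:ℝ) := by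
      have hn0 : (0:ℝ) ≤ (n:ℝ) := Nat.cast_nonneg n
      simp only [mem_Ici]; linarith
    have hftend : Tendsto (fun k => f (x k)) atTop (nhds (f u)) := by
      have hcw : ContinuousWithinAt f (Ici 0) u := hcont u hu0
      exact hcw.tendsto.comp
        (tendsto_nhdsWithin_of_tendsto_nhds_of_eventually_within x hxtend
          (Eventually.of_forall hx0))
    have hbd : ∀ k, |f (x k) - f (n : ℝ)| ≤ ((n : ℝ) + 1) / 16 := by
      intro k
      exact (dyad n hn k _ (hile k)).trans (sumbd n k)
    have habs : Tendsto (fun k => |f (x k) - f (n : ℝ)|) atTop (nhds (|f u - f (n : ℝ)|)) :=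
      ((hftend.sub tendsto_const_nhds).abs)
    exact le_of_tendsto habs (Eventually.of_forall hbd)
  -- conclusion
  obtain ⟨C₀, hC₀⟩ := (isCompact_Icc (a := (0:ℝ)) (b := (N : ℝ) + 1)).exists_bound_of_continuousOn
    (hcont.mono (fun y hy => hy.1))
  refine ⟨max C₀ 0 + 1, by positivity, ?_⟩
  intro u hu
  rcases le_or_gt u ((N : ℝ) + 1) with hcase | hcase
  · have h1 : ‖f u‖ ≤ C₀ := hC₀ u ⟨hu, hcase⟩
    rw [Real.norm_eq_abs] at h1
    have h2 : C₀ ≤ max C₀ 0 := le_max_left _ _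
    have h3 : 0 ≤ u / 8 := by positivity
    linarith
  · set n := ⌊u⌋₊ with hndef
    have hn : N ≤ n := by
      have : (N : ℝ) + 1 ≤ u := hcase.le
      have := Nat.le_floor (by push_cast; linarith : ((N + 1 : ℕ) : ℝ) ≤ u)
      omega
    have h1 : (n : ℝ) ≤ u := Nat.floor_le hu
    have h2 : u ≤ (n : ℝ) + 1 := (Nat.lt_floor_add_one u).le
    have h3 := blockosc n hn u h1 h2
    have h4 := hgrid n hn
    rw [h0, sub_zero] at h4
    have h5 : |f u| ≤ |f u - f (n : ℝ)| + |f (n : ℝ)| := by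
      calc |f u| = |(f u - f (n : ℝ)) + f (n : ℝ)| := by ring_nf
        _ ≤ |f u - f (n : ℝ)| + |f (n : ℝ)| := abs_add_le _ _
    have h6 : ((n : ℝ) + 1) ≤ u + 1 := by linarith
    have h7 : 0 ≤ max C₀ 0 := le_max_right _ _
    calc |f u| ≤ ((n : ℝ) + 1) / 16 + ((n : ℝ) + 1) / 16 := by linarith
      _ = ((n : ℝ) + 1) / 8 := by ring
      _ ≤ (u + 1) / 8 := by linarith
      _ = u / 8 + 1 / 8 := by ring
      _ ≤ u / 8 + (max C₀ 0 + 1) := by linarith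

set_option maxHeartbeats 1000000 in
lemma linear_growth {Ω : Type*} [MeasurableSpace Ω] (P : Measure Ω)
    (B : ℝ → Ω → ℝ) (hB : IsStdBrownian P B) :
    ∀ᵐ ω ∂P, ∃ C : ℝ, 0 ≤ C ∧ ∀ u : ℝ, 0 ≤ u → |B u ω| ≤ u / 8 + C := by
  classical
  set A1 : ℝ := 6 ^ 6 * 25088 ^ 6 with hA1
  set σ : ℝ := (7 / 6 : ℝ) ^ 12 / 64 with hσ
  set ρ : ℝ := 2 * σ with hρ
  have hA1pos : 0 < A1 := by rw [hA1]; norm_num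
  have hσpos : 0 < σ := by rw [hσ]; positivity
  have hρpos : 0 < ρ := by rw [hρ]; positivity
  have hρhalf : ρ ≤ 1 / 2 := by
    rw [hρ, hσ]
    norm_num
  clear_value A1 σ ρ
  set D : ℕ → ℕ → ℕ → Set Ω := fun n k i =>
    {ω | ((n : ℝ) + 1) * (6 / 7) ^ k / 112
        ≤ |B ((n : ℝ) + ((i : ℝ) + 1) / 2 ^ k) ω - B ((n : ℝ) + (i : ℝ) / 2 ^ k) ω|} with hD
  set S : ℕ → Set Ω := fun n =>
    {ω | ((n : ℝ) + 1) / 16 ≤ |B (n : ℝ) ω - B 0 ω|} ∪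
      ⋃ (k : ℕ), ⋃ (i : Fin (2 ^ k)), D n k (i : ℕ) with hS
  -- grid bound
  have hgridbd : ∀ n : ℕ,
      P {ω | ((n : ℝ) + 1) / 16 ≤ |B (n : ℝ) ω - B 0 ω|}
        ≤ ENNReal.ofReal (32 * rexp (-(n : ℝ) / 512)) := by
    intro n
    have ha : (0:ℝ) < ((n : ℝ) + 1) / 16 := by positivity
    have h := incr_tail P B hB (le_refl 0) (Nat.cast_nonneg n) ha
    rw [sub_zero] at h
    refine h.trans (ENNReal.ofReal_le_ofReal ?_)
    have h1 : Real.sqrt n / (((n : ℝ) + 1) / 16) ≤ 16 := by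
      rw [div_le_iff₀ ha]
      have h2 : Real.sqrt n ≤ (n : ℝ) + 1 := by
        rw [show (n:ℝ) + 1 = Real.sqrt (((n:ℝ)+1)^2) from (Real.sqrt_sq (by positivity)).symm]
        apply Real.sqrt_le_sqrt
        nlinarith [Nat.cast_nonneg (α := ℝ) n]
      linarith
    have h2 : rexp (-(((n : ℝ) + 1) / 16) ^ 2 / (2 * (n : ℝ))) ≤ rexp (-(n : ℝ) / 512) := by
      apply Real.exp_le_exp.2
      rcases Nat.eq_zero_or_pos n with h0 | hpos
      · subst h0; norm_num
      · have hn0 : (0:ℝ) < n := by exact_mod_cast hpos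
        have key : (n:ℝ) / 512 ≤ (((n : ℝ) + 1) / 16) ^ 2 / (2 * n) := by
          rw [div_le_div_iff₀ (by norm_num) (by positivity)]
          nlinarith
        calc -(((n : ℝ) + 1) / 16) ^ 2 / (2 * n)
            = -((((n : ℝ) + 1) / 16) ^ 2 / (2 * n)) := by ring
          _ ≤ -((n:ℝ)/512) := neg_le_neg key
          _ = -(n:ℝ)/512 := by ring
    have hsa : 0 ≤ Real.sqrt n / (((n : ℝ) + 1) / 16) := by positivity
    calc 2 * (Real.sqrt n / (((n : ℝ) + 1) / 16))
          * rexp (-(((n : ℝ) + 1) / 16) ^ 2 / (2 * (n : ℝ)))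
        ≤ (2 * 16) * rexp (-(n : ℝ) / 512) := by
          apply mul_le_mul (by linarith) h2 (exp_nonneg _) (by norm_num)
      _ = 32 * rexp (-(n : ℝ) / 512) := by norm_num
  -- single oscillation event bound
  have hDbd : ∀ n k i : ℕ, i < 2 ^ k →
      P (D n k i) ≤ ENNReal.ofReal (224 * A1 / ((n:ℝ)+1) ^ 12 * σ ^ k) := by
    intro n k i hik
    set a : ℝ := ((n : ℝ) + 1) * (6 / 7) ^ k / 112 with hadef
    have hapos : 0 < a := by rw [hadef]; positivity
    set s : ℝ := (n : ℝ) + (i : ℝ) / 2 ^ k with hsdef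
    set t : ℝ := (n : ℝ) + ((i : ℝ) + 1) / 2 ^ k with htdef
    have hs0 : 0 ≤ s := by rw [hsdef]; positivity
    have hst : s ≤ t := by
      rw [hsdef, htdef]
      have : (0:ℝ) < 2 ^ k := by positivity
      gcongr
      linarith
    have hts : t - s = ((1:ℝ)/2) ^ k := by
      rw [hsdef, htdef, div_pow, one_pow]
      ring
    have h := incr_tail P B hB hs0 hst hapos
    rw [hts] at h
    refine h.trans (ENNReal.ofReal_le_ofReal ?_)
    -- prefactor
    have hsq : Real.sqrt (((1:ℝ)/2) ^ k) ^ 2 = ((1:ℝ)/2) ^ k :=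
      Real.sq_sqrt (by positivity)
    have hsqnn : 0 ≤ Real.sqrt (((1:ℝ)/2) ^ k) := Real.sqrt_nonneg _
    have hx1 : (7/6:ℝ) ^ k * Real.sqrt (((1:ℝ)/2) ^ k) ≤ 1 := by
      have hxsq : ((7/6:ℝ) ^ k * Real.sqrt (((1:ℝ)/2) ^ k)) ^ 2 = (49/72 : ℝ) ^ k := by
        rw [mul_pow, hsq, ← pow_mul, mul_comm k 2, pow_mul, ← mul_pow]
        norm_num
      have hle1 : ((7/6:ℝ) ^ k * Real.sqrt (((1:ℝ)/2) ^ k)) ^ 2 ≤ 1 := by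
        rw [hxsq]
        exact pow_le_one₀ (by norm_num) (by norm_num)
      nlinarith [mul_nonneg (pow_nonneg (by norm_num : (0:ℝ) ≤ 7/6) k) hsqnn]
    have hone : (7/6:ℝ)^k * (6/7:ℝ)^k = 1 := by
      rw [← mul_pow]; norm_num
    have hsle : Real.sqrt (((1:ℝ)/2) ^ k) ≤ (6/7:ℝ)^k := by
      have h67 : (0:ℝ) ≤ (6/7:ℝ)^k := by positivity
      have h2 := mul_le_mul_of_nonneg_right hx1 h67
      have h3 : ((7/6:ℝ)^k * Real.sqrt (((1:ℝ)/2) ^ k)) * (6/7:ℝ)^k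
          = Real.sqrt (((1:ℝ)/2) ^ k) := by
        rw [mul_comm ((7/6:ℝ)^k) _, mul_assoc, hone, mul_one]
      rw [h3, one_mul] at h2
      exact h2
    have hpre : Real.sqrt (((1:ℝ)/2) ^ k) / a ≤ 112 / ((n:ℝ)+1) := by
      have hn1 : ((n:ℝ)+1) ≠ 0 := by positivity
      have h67 : ((6/7:ℝ)^k) ≠ 0 := by positivity
      have heq : (6/7:ℝ)^k / a = 112 / ((n:ℝ)+1) := by
        rw [hadef]
        field_simp
      rw [← heq]
      gcongr
    -- exponential factor
    set q : ℝ := ((n:ℝ)+1)^2 * ((6/7:ℝ)^k)^2 * 2^k / 25088 with hqdef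
    have hqpos : 0 < q := by rw [hqdef]; positivity
    have hargeq : -a ^ 2 / (2 * ((1:ℝ)/2) ^ k) = -q := by
      rw [hadef, hqdef, show ((1:ℝ)/2) ^ k = ((2:ℝ)^k)⁻¹ by rw [one_div, inv_pow]]
      have h2k : (2:ℝ) ^ k ≠ 0 := by positivity
      field_simp
      ring
    rw [hargeq]
    have hexp : rexp (-q) ≤ (6 / q) ^ 6 := exp_neg_le_pow6 hqpos
    have hqpow : (6 / q) ^ 6 = A1 * σ ^ k / ((n:ℝ)+1) ^ 12 := by
      rw [hqdef, hA1, hσ]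
      have ea : (((7/6:ℝ)^12)^k) = ((7/6:ℝ)^k)^12 := by
        rw [← pow_mul, ← pow_mul, mul_comm]
      have eb : ((64:ℝ))^k = ((2:ℝ)^k)^6 := by
        calc (64:ℝ)^k = ((2:ℝ)^6)^k := by norm_num
          _ = (2:ℝ)^(6*k) := (pow_mul 2 6 k).symm
          _ = (2:ℝ)^(k*6) := by rw [mul_comm]
          _ = ((2:ℝ)^k)^6 := pow_mul 2 k 6
      have e1 : ((7/6:ℝ)^12 / 64) ^ k = (((7/6:ℝ)^k)^ 12) / ((2:ℝ)^k)^6 := by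
        rw [div_pow, ea, eb]
      rw [e1]
      have h76 : (7/6:ℝ)^k = ((6/7:ℝ)^k)⁻¹ := by
        rw [← inv_pow]; norm_num
      rw [h76]
      have h2k : (0:ℝ) < 2 ^ k := by positivity
      have h67 : (0:ℝ) < (6/7:ℝ)^k := by positivity
      rw [div_pow]
      field_simp
    calc 2 * (Real.sqrt (((1:ℝ)/2) ^ k) / a) * rexp (-q)
        ≤ 2 * (112 / ((n:ℝ)+1)) * (6 / q) ^ 6 := by
          apply mul_le_mul (by linarith) hexp (exp_nonneg _) (by positivity)
      _ = 224 / ((n:ℝ)+1) * (A1 * σ ^ k / ((n:ℝ)+1) ^ 12) := by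
          rw [hqpow]; ring
      _ ≤ 224 * (A1 * σ ^ k / ((n:ℝ)+1) ^ 12) := by
          have hn1 : (1:ℝ) ≤ (n:ℝ) + 1 := by
            have := Nat.cast_nonneg (α := ℝ) n; linarith
          have h224 : 224 / ((n:ℝ)+1) ≤ 224 := by
            rw [div_le_iff₀ (by linarith)]
            nlinarith
          exact mul_le_mul_of_nonneg_right h224 (by positivity)
      _ = 224 * A1 / ((n:ℝ)+1) ^ 12 * σ ^ k := by ring
  -- union over i and k
  have hoscbd : ∀ n : ℕ, P (⋃ (k : ℕ), ⋃ (i : Fin (2 ^ k)), D n k (i : ℕ))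
      ≤ ENNReal.ofReal (448 * A1 / ((n:ℝ)+1) ^ 12) := by
    intro n
    have step1 : ∀ k : ℕ, P (⋃ (i : Fin (2 ^ k)), D n k (i : ℕ))
        ≤ ENNReal.ofReal ((224 * A1 / ((n:ℝ)+1) ^ 12) * ρ ^ k) := by
      intro k
      calc P (⋃ (i : Fin (2 ^ k)), D n k (i : ℕ))
          ≤ ∑' (i : Fin (2 ^ k)), P (D n k (i : ℕ)) := measure_iUnion_le _
        _ ≤ ∑' (_i : Fin (2 ^ k)), ENNReal.ofReal (224 * A1 / ((n:ℝ)+1) ^ 12 * σ ^ k) :=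
            ENNReal.tsum_le_tsum (fun i => hDbd n k i i.2)
        _ = (2 ^ k : ℕ) * ENNReal.ofReal (224 * A1 / ((n:ℝ)+1) ^ 12 * σ ^ k) := by
            rw [tsum_fintype, Finset.sum_const, Finset.card_univ, Fintype.card_fin,
              nsmul_eq_mul]
        _ = ENNReal.ofReal ((2:ℝ) ^ k * (224 * A1 / ((n:ℝ)+1) ^ 12 * σ ^ k)) := by
            have hcast : ((2 ^ k : ℕ) : ℝ≥0∞) = ENNReal.ofReal ((2:ℝ) ^ k) := by
              rw [ENNReal.ofReal_pow (by norm_num : (0:ℝ) ≤ 2)]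
              push_cast
              norm_num
            rw [hcast, ← ENNReal.ofReal_mul (by positivity)]
        _ = ENNReal.ofReal ((224 * A1 / ((n:ℝ)+1) ^ 12) * ρ ^ k) := by
            congr 1
            rw [hρ, mul_pow]
            ring
    calc P (⋃ (k : ℕ), ⋃ (i : Fin (2 ^ k)), D n k (i : ℕ))
        ≤ ∑' (k : ℕ), P (⋃ (i : Fin (2 ^ k)), D n k (i : ℕ)) := measure_iUnion_le _
      _ ≤ ∑' (k : ℕ), ENNReal.ofReal ((224 * A1 / ((n:ℝ)+1) ^ 12) * ρ ^ k) :=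
          ENNReal.tsum_le_tsum step1
      _ = ENNReal.ofReal (∑' (k : ℕ), (224 * A1 / ((n:ℝ)+1) ^ 12) * ρ ^ k) :=
          (ENNReal.ofReal_tsum_of_nonneg (fun k => by positivity)
            ((summable_geometric_of_lt_one hρpos.le (by linarith)).mul_left _)).symm
      _ ≤ ENNReal.ofReal (448 * A1 / ((n:ℝ)+1) ^ 12) := by
          apply ENNReal.ofReal_le_ofReal
          rw [tsum_mul_left, tsum_geometric_of_lt_one hρpos.le (by linarith)]
          have h2 : (1 - ρ)⁻¹ ≤ 2 := by
            have h3 : (1:ℝ)/2 ≤ 1 - ρ := by linarith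
            calc (1 - ρ)⁻¹ ≤ ((1:ℝ)/2)⁻¹ :=
                  inv_anti₀ (by norm_num) h3
              _ = 2 := by norm_num
          have h4 : (0:ℝ) ≤ 224 * A1 / ((n:ℝ)+1) ^ 12 := by positivity
          calc 224 * A1 / ((n:ℝ)+1) ^ 12 * (1 - ρ)⁻¹
              ≤ 224 * A1 / ((n:ℝ)+1) ^ 12 * 2 := mul_le_mul_of_nonneg_left h2 h4
            _ = 448 * A1 / ((n:ℝ)+1) ^ 12 := by ring
  -- total bound and Borel-Cantelli
  set g : ℕ → ℝ := fun n => 32 * rexp (-(n : ℝ) / 512) + 448 * A1 / ((n:ℝ)+1) ^ 12 with hg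
  have hSbd : ∀ n : ℕ, P (S n) ≤ ENNReal.ofReal (g n) := by
    intro n
    refine (measure_union_le _ _).trans ?_
    rw [hg, ENNReal.ofReal_add (by positivity) (by positivity)]
    exact add_le_add (hgridbd n) (hoscbd n)
  have hsummable : Summable g := by
    rw [hg]
    apply Summable.add
    · apply Summable.mul_left
      have hlt : rexp (-1/512) < 1 := by
        rw [← Real.exp_zero]
        exact Real.exp_lt_exp.2 (by norm_num)
      apply Summable.congr (summable_geometric_of_lt_one (exp_nonneg _) hlt)
      intro n
      rw [← Real.exp_nat_mul]
      congr 1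
      ring
    · have base : Summable (fun n : ℕ => 1/((n:ℝ)^12)) :=
        Real.summable_one_div_nat_pow.2 (by norm_num)
      have shift : Summable (fun n : ℕ => 1/((((n+1):ℕ):ℝ)^12)) :=
        (summable_nat_add_iff 1).2 base
      apply Summable.congr (shift.mul_left (448 * A1))
      intro n
      push_cast
      rw [mul_one_div]
  have htop : (∑' n, P (S n)) ≠ ⊤ := by
    have h1 : (∑' n, P (S n)) ≤ ENNReal.ofReal (∑' n, g n) := by
      rw [ENNReal.ofReal_tsum_of_nonneg (fun n => by rw [hg]; positivity) hsummable]
      exact ENNReal.tsum_le_tsum hSbd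
    exact ne_top_of_le_ne_top ENNReal.ofReal_ne_top h1
  have hBC := MeasureTheory.ae_eventually_notMem htop
  filter_upwards [hBC, hB.2.1] with ω hω h0ω
  rw [Filter.eventually_atTop] at hω
  obtain ⟨N, hN⟩ := hω
  apply path_bound (fun t => B t ω) (hB.2.2.1 ω) h0ω N
  · intro n hn
    have h1 := hN n hn
    have h2 : ω ∉ {ω | ((n : ℝ) + 1) / 16 ≤ |B (n : ℝ) ω - B 0 ω|} :=
      fun hc => h1 (Set.mem_union_left _ hc)
    exact not_le.1 h2
  · intro n hn k i hik
    have h1 := hN n hn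
    have h2 : ω ∉ D n k i := by
      intro hc
      exact h1 (Set.mem_union_right _
        (Set.mem_iUnion.2 ⟨k, Set.mem_iUnion.2 ⟨⟨i, hik⟩, hc⟩⟩))
    exact not_le.1 h2

set_option maxHeartbeats 1000000 in
lemma det_part (b : ℝ → ℝ) (hb : Continuous b) (C : ℝ) (hC : 0 ≤ C)
    (hlin : ∀ t : ℝ, |b t| ≤ |t| / 8 + C) (M : ℝ → ℝ)
    (hM : ∀ t : ℝ, M t = rexp (b t - t / 2)) :
    (∀ t : ℝ, IntegrableOn (fun s => 1 / M s ^ 2) (Set.Iic t) volume) ∧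
    ∀ T : ℝ, 0 < T →
      TendstoUniformlyOn
        (fun (lam : ℝ) (p : ℝ × ℝ) =>
          (M p.1 * M p.2 / (M lam - M (-lam)) ^ 2) *
            (M lam ^ 2 * (∫ s in p.2..lam, 1 / M s ^ 2) +
             M lam * M (-lam) * (∫ s in p.1..p.2, 1 / M s ^ 2) +
             M (-lam) ^ 2 * (∫ s in (-lam)..p.1, 1 / M s ^ 2)))
        (fun p => M p.1 * M p.2 * ∫ s in Set.Iic (min p.1 p.2), 1 / M s ^ 2)
        Filter.atTop {p : ℝ × ℝ | -T ≤ p.1 ∧ p.1 ≤ p.2 ∧ p.2 ≤ T} := by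
  have hMpos : ∀ t, 0 < M t := fun t => (hM t).symm ▸ Real.exp_pos _
  have hfeq : ∀ s : ℝ, 1 / M s ^ 2 = rexp (s - 2 * b s) := by
    intro s
    have h2 : (rexp (b s - s / 2)) ^ 2 = rexp (2 * (b s - s / 2)) := by
      rw [← Real.exp_nat_mul]
      norm_num
    rw [hM s, h2, one_div, ← Real.exp_neg]
    congr 1
    ring
  have hfcont : Continuous (fun s : ℝ => 1 / M s ^ 2) := by
    have : (fun s : ℝ => 1 / M s ^ 2) = fun s => rexp (s - 2 * b s) := funext hfeq
    rw [this]
    fun_prop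
  have hfpos : ∀ s : ℝ, 0 < 1 / M s ^ 2 := fun s => by have := hMpos s; positivity
  have hfle : ∀ s : ℝ, 1 / M s ^ 2 ≤ rexp (2 * C) * rexp (s + |s| / 4) := by
    intro s
    rw [hfeq, ← Real.exp_add]
    apply Real.exp_le_exp.2
    have h1 := hlin s
    have h2 : -|b s| ≤ b s := neg_abs_le _
    linarith
  have hfle' : ∀ s : ℝ, s ≤ 0 → 1 / M s ^ 2 ≤ rexp (2 * C) * rexp ((3/4) * s) := by
    intro s hs
    refine (hfle s).trans ?_
    apply mul_le_mul_of_nonneg_left _ (exp_nonneg _)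
    apply Real.exp_le_exp.2
    rw [abs_of_nonpos hs]
    linarith
  have hintIic : ∀ t : ℝ, IntegrableOn (fun s => 1 / M s ^ 2) (Set.Iic t) volume := by
    intro t
    have h1 : IntegrableOn (fun s => 1 / M s ^ 2) (Iic 0) := by
      apply Integrable.mono'
        (((integrableOn_exp_mul_Iic (by norm_num : (0:ℝ) < 3/4) 0)).const_mul (rexp (2 * C)))
      · exact hfcont.aestronglyMeasurable.restrict
      · filter_upwards [ae_restrict_mem measurableSet_Iic] with s hs
        rw [Real.norm_eq_abs, abs_of_pos (hfpos s)]
        exact hfle' s hs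
    have h2 : IntegrableOn (fun s => 1 / M s ^ 2) (Icc 0 (max t 0)) :=
      hfcont.integrableOn_Icc
    have h3 : Iic t ⊆ Iic 0 ∪ Icc 0 (max t 0) := by
      intro x hx
      rcases le_or_gt x 0 with h | h
      · exact Or.inl h
      · exact Or.inr ⟨h.le, le_trans hx (le_max_left _ _)⟩
    exact (h1.union h2).mono_set h3
  refine ⟨hintIic, ?_⟩
  intro T hT
  -- notation
  set f : ℝ → ℝ := fun s => 1 / M s ^ 2 with hfdef
  set J : ℝ → ℝ := fun x => ∫ s in Iic x, f s with hJdef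
  have hJnonneg : ∀ x, 0 ≤ J x := fun x =>
    setIntegral_nonneg measurableSet_Iic (fun s _ => (hfpos s).le)
  have hJtail : ∀ x : ℝ, x ≤ 0 → J x ≤ rexp (2 * C) * ((4:ℝ)/3) * rexp ((3/4) * x) := by
    intro x hx
    have h1 : J x ≤ ∫ s in Iic x, rexp (2 * C) * rexp ((3/4) * s) := by
      apply setIntegral_mono_on (hintIic x)
        ((integrableOn_exp_mul_Iic (by norm_num : (0:ℝ) < 3/4) x).const_mul _)
        measurableSet_Iic
      intro s hs
      exact hfle' s (le_trans hs hx)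
    rw [integral_const_mul, integral_exp_mul_Iic (by norm_num : (0:ℝ) < 3/4) x] at h1
    calc J x ≤ rexp (2 * C) * (rexp ((3/4) * x) / (3/4)) := h1
      _ = rexp (2 * C) * ((4:ℝ)/3) * rexp ((3/4) * x) := by ring
  have hsplit : ∀ lam x : ℝ, -lam ≤ x → (∫ s in (-lam)..x, f s) = J x - J (-lam) := by
    intro lam x h
    rw [intervalIntegral.integral_of_le h]
    have hu : Iic (-lam) ∪ Ioc (-lam) x = Iic x := Iic_union_Ioc_eq_Iic h
    have hdisj : Disjoint (Iic (-lam)) (Ioc (-lam) x) := by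
      apply Set.disjoint_left.2
      intro y hy1 hy2
      exact absurd hy2.1 (not_lt.2 hy1)
    have h1 : IntegrableOn f (Iic (-lam)) := hintIic _
    have h2 : IntegrableOn f (Ioc (-lam) x) :=
      (hintIic x).mono_set (fun y hy => hy.2)
    have := setIntegral_union hdisj measurableSet_Ioc h1 h2 (f := f) (μ := volume)
    rw [hu] at this
    rw [hJdef]
    simp only
    rw [this]
    ring
  -- uniform part
  have hMcont : Continuous M := by
    have : M = fun t => rexp (b t - t / 2) := funext hM
    rw [this]; fun_prop
  obtain ⟨K, hK⟩ := (isCompact_Icc (a := -T) (b := T)).exists_bound_of_continuousOn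
    hMcont.continuousOn
  have hKM : ∀ x ∈ Icc (-T) T, M x ≤ K := fun x hx =>
    (le_abs_self _).trans (by rw [← Real.norm_eq_abs]; exact hK x hx)
  have hKpos : 0 < K := lt_of_lt_of_le (hMpos T) (hKM T ⟨by linarith, le_rfl⟩)
  set lam0 : ℝ := max T ((4/3) * (2 * C + Real.log 2)) with hlam0def
  set φ : ℝ → ℝ := fun lam =>
    K ^ 2 * ((16/5) * rexp (6 * C + T / 2) * rexp (-(1/4) * lam)
      + (4 * J T + 16/3 + 8 * J T) * rexp (2 * C) * rexp (-(3/4) * lam)) with hφdef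
  have key : ∀ lam : ℝ, lam0 ≤ lam → ∀ t t' : ℝ, -T ≤ t → t ≤ t' → t' ≤ T →
      |(M t * M t' / (M lam - M (-lam)) ^ 2) *
          (M lam ^ 2 * (∫ s in t'..lam, f s) +
           M lam * M (-lam) * (∫ s in t..t', f s) +
           M (-lam) ^ 2 * (∫ s in (-lam)..t, f s))
        - M t * M t' * ∫ s in Iic (min t t'), f s| ≤ φ lam := by
    intro lam hlam t t' ht htt' ht'
    have hTlam : T ≤ lam := le_trans (le_max_left _ _) hlam
    have hlampos : 0 < lam := lt_of_lt_of_le hT hTlam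
    have hxlog : 2 * C - (3/4) * lam ≤ -Real.log 2 := by
      have h1 : (4/3) * (2 * C + Real.log 2) ≤ lam := le_trans (le_max_right _ _) hlam
      linarith
    have hPle : M lam ≤ rexp (C - (3/8) * lam) := by
      rw [hM]
      apply Real.exp_le_exp.2
      have h1 := hlin lam
      rw [abs_of_pos hlampos] at h1
      have h2 := le_abs_self (b lam)
      linarith
    have hQge : rexp (-C + (3/8) * lam) ≤ M (-lam) := by
      rw [hM]
      apply Real.exp_le_exp.2
      have h1 := hlin (-lam)
      rw [abs_neg, abs_of_pos hlampos] at h1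
      have h2 := neg_abs_le (b (-lam))
      linarith
    have hr : M lam / M (-lam) ≤ rexp (2 * C - (3/4) * lam) := by
      calc M lam / M (-lam) ≤ rexp (C - (3/8)*lam) / rexp (-C + (3/8)*lam) :=
            div_le_div₀ (exp_nonneg _) hPle (exp_pos _) hQge
        _ = rexp (2*C - (3/4)*lam) := by rw [← Real.exp_sub]; congr 1; ring
    have hrhalf : rexp (2 * C - (3/4) * lam) ≤ 1/2 := by
      have h1 : rexp (2 * C - (3/4) * lam) ≤ rexp (-Real.log 2) := Real.exp_le_exp.2 hxlog
      rw [Real.exp_neg, Real.exp_log (by norm_num : (0:ℝ) < 2)] at h1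
      linarith
    have hPQhalf : M lam ≤ (1/2) * M (-lam) := by
      have h1 : M lam / M (-lam) ≤ 1/2 := hr.trans hrhalf
      rw [div_le_iff₀ (hMpos (-lam))] at h1
      linarith
    have hPrQ : M lam ≤ rexp (2 * C - (3/4) * lam) * M (-lam) := by
      have h1 := hr
      rw [div_le_iff₀ (hMpos (-lam))] at h1
      linarith
    have hDsq_ge : (M (-lam)) ^ 2 / 4 ≤ (M lam - M (-lam)) ^ 2 := by
      nlinarith [hMpos (-lam), hMpos lam, hPQhalf]
    have hDsqpos : 0 < (M lam - M (-lam)) ^ 2 := by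
      have h1 := hMpos (-lam)
      have h2 : (0:ℝ) < (M (-lam))^2/4 := by positivity
      linarith
    have hQdiv : (M (-lam)) ^ 2 / (M lam - M (-lam)) ^ 2 ≤ 4 := by
      rw [div_le_iff₀ hDsqpos]
      nlinarith [hDsq_ge]
    have hfrac1 : 1 ≤ (M (-lam)) ^ 2 / (M lam - M (-lam)) ^ 2 := by
      rw [le_div_iff₀ hDsqpos]
      nlinarith [hMpos lam, hPQhalf, hMpos (-lam)]
    have hfrac : (M (-lam)) ^ 2 / (M lam - M (-lam)) ^ 2 - 1
        ≤ 8 * rexp (2 * C - (3/4) * lam) := by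
      rw [sub_le_iff_le_add, div_le_iff₀ hDsqpos]
      have h8 : (0:ℝ) ≤ 8 * rexp (2 * C - (3/4) * lam) := by positivity
      nlinarith [hDsq_ge, hPrQ, hMpos lam, hMpos (-lam),
        mul_le_mul_of_nonneg_left hDsq_ge h8,
        mul_le_mul_of_nonneg_right hPrQ (le_of_lt (hMpos (-lam))),
        sq_nonneg (M lam)]
    -- integral bounds
    have hI1nonneg : 0 ≤ ∫ s in t'..lam, f s :=
      intervalIntegral.integral_nonneg (by linarith) (fun s _ => (hfpos s).le)
    have hI2nonneg : 0 ≤ ∫ s in t..t', f s :=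
      intervalIntegral.integral_nonneg htt' (fun s _ => (hfpos s).le)
    have hIval : (∫ s in t'..lam, f s) ≤ (4/5) * rexp (2*C + T/2) * rexp ((5/4) * lam) := by
      have hstep1 : (∫ s in t'..lam, f s) ≤ ∫ s in (-T)..lam, f s := by
        rw [intervalIntegral.integral_of_le (by linarith),
          intervalIntegral.integral_of_le (by linarith)]
        exact setIntegral_mono_set ((hintIic lam).mono_set (fun y hy => hy.2))
          (Eventually.of_forall (fun s => (hfpos s).le))
          (HasSubset.Subset.eventuallyLE (Ioc_subset_Ioc_left (by linarith)))
      have hcont2 : Continuous (fun s : ℝ => rexp (2*C + T/2) * rexp ((5/4) * s)) := by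
        fun_prop
      have hstep2 : (∫ s in (-T)..lam, f s)
          ≤ ∫ s in (-T)..lam, rexp (2*C + T/2) * rexp ((5/4) * s) := by
        apply intervalIntegral.integral_mono_on (by linarith)
          (hfcont.intervalIntegrable _ _) (hcont2.intervalIntegrable _ _)
        intro s hs
        refine (hfle s).trans ?_
        rw [← Real.exp_add, ← Real.exp_add]
        apply Real.exp_le_exp.2
        rcases le_or_gt 0 s with h | h
        · rw [abs_of_nonneg h]; linarith
        · rw [abs_of_neg h]
          have := hs.1
          linarith
      have hstep3 : (∫ s in (-T)..lam, rexp (2*C + T/2) * rexp ((5/4) * s))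
          = rexp (2*C + T/2) * ((4/5) * rexp ((5/4)*lam) - (4/5) * rexp ((5/4)*(-T))) := by
        rw [intervalIntegral.integral_const_mul]
        congr 1
        have hderiv : ∀ x ∈ uIcc (-T) lam,
            HasDerivAt (fun s => (4/5) * rexp ((5/4) * s)) (rexp ((5/4) * x)) x := by
          intro x _
          have h1 : HasDerivAt (fun s : ℝ => (5/4) * s) (5/4) x := by
            simpa using (hasDerivAt_id x).const_mul (5/4:ℝ)
          have h2 := (h1.exp).const_mul (4/5:ℝ)
          exact h2.congr_deriv (by ring)
        rw [intervalIntegral.integral_eq_sub_of_hasDerivAt hderiv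
          ((Real.continuous_exp.comp (by fun_prop)).intervalIntegrable _ _)]
      calc (∫ s in t'..lam, f s)
          ≤ ∫ s in (-T)..lam, rexp (2*C + T/2) * rexp ((5/4) * s) := hstep1.trans hstep2
        _ = rexp (2*C + T/2) * ((4/5) * rexp ((5/4)*lam) - (4/5) * rexp ((5/4)*(-T))) := hstep3
        _ ≤ (4/5) * rexp (2*C + T/2) * rexp ((5/4) * lam) := by
            nlinarith [mul_pos (exp_pos (2*C + T/2)) (exp_pos ((5/4)*(-T)))]
    have hexpsq : ∀ y : ℝ, (rexp y) ^ 2 = rexp (2 * y) := by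
      intro y
      rw [← Real.exp_nat_mul]
      norm_num
    have hP2 : M lam ^ 2 ≤ rexp (2*C - (3/4) * lam) := by
      have h2 : M lam ^ 2 ≤ (rexp (C - (3/8)*lam)) ^ 2 :=
        pow_le_pow_left₀ (hMpos lam).le hPle 2
      rw [hexpsq] at h2
      refine h2.trans_eq ?_
      congr 1
      ring
    have hQ2 : rexp (-(2*C) + (3/4) * lam) ≤ M (-lam) ^ 2 := by
      have h2 : (rexp (-C + (3/8)*lam)) ^ 2 ≤ M (-lam) ^ 2 :=
        pow_le_pow_left₀ (exp_nonneg _) hQge 2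
      rw [hexpsq] at h2
      refine le_trans (le_of_eq ?_) h2
      congr 1
      ring
    -- the three keys
    have key1 : M lam ^ 2 * (∫ s in t'..lam, f s) / (M lam - M (-lam)) ^ 2
        ≤ (16/5) * rexp (6*C + T/2) * rexp (-(1/4) * lam) := by
      have hnum : 0 ≤ M lam ^ 2 * (∫ s in t'..lam, f s) := mul_nonneg (sq_nonneg _) hI1nonneg
      calc M lam ^ 2 * (∫ s in t'..lam, f s) / (M lam - M (-lam)) ^ 2
          ≤ M lam ^ 2 * (∫ s in t'..lam, f s) / (M (-lam) ^ 2 / 4) := by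
            apply div_le_div_of_nonneg_left hnum _ hDsq_ge
            have := hMpos (-lam); positivity
        _ = 4 * (M lam ^ 2 * (∫ s in t'..lam, f s)) / M (-lam) ^ 2 := by ring
        _ ≤ 4 * (rexp (2*C-(3/4)*lam) * ((4/5) * rexp (2*C + T/2) * rexp ((5/4) * lam)))
              / rexp (-(2*C) + (3/4)*lam) := by
            apply div_le_div₀ (by positivity) _ (exp_pos _) hQ2
            have h1 := mul_le_mul hP2 hIval hI1nonneg (exp_nonneg _)
            linarith
        _ = (16/5) * rexp (6*C + T/2) * rexp (-(1/4) * lam) := by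
            rw [div_eq_mul_inv, ← Real.exp_neg]
            rw [show (4:ℝ) * (rexp (2*C-(3/4)*lam) * ((4/5) * rexp (2*C + T/2) * rexp ((5/4) * lam)))
                * rexp (-(-(2*C) + (3/4)*lam))
              = (16/5) * (rexp (2*C-(3/4)*lam) * rexp (2*C + T/2) * rexp ((5/4) * lam)
                * rexp (-(-(2*C) + (3/4)*lam))) from by ring]
            rw [← Real.exp_add, ← Real.exp_add, ← Real.exp_add]
            rw [show 2*C-(3/4)*lam + (2*C + T/2) + (5/4)*lam + -(-(2*C) + (3/4)*lam)
              = (6*C + T/2) + (-(1/4)*lam) from by ring]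
            rw [Real.exp_add]
            ring
    have hI2le : (∫ s in t..t', f s) ≤ J T := by
      rw [intervalIntegral.integral_of_le htt']
      exact setIntegral_mono_set (hintIic T)
        (Eventually.of_forall (fun s => (hfpos s).le))
        (HasSubset.Subset.eventuallyLE (fun y hy => le_trans hy.2 ht'))
    have key2 : M lam * M (-lam) * (∫ s in t..t', f s) / (M lam - M (-lam)) ^ 2
        ≤ 4 * rexp (2*C - (3/4)*lam) * J T := by
      have hnum : 0 ≤ M lam * M (-lam) * (∫ s in t..t', f s) :=
        mul_nonneg (mul_nonneg (hMpos _).le (hMpos _).le) hI2nonneg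
      have hQne : M (-lam) ≠ 0 := (hMpos _).ne'
      calc M lam * M (-lam) * (∫ s in t..t', f s) / (M lam - M (-lam)) ^ 2
          ≤ M lam * M (-lam) * (∫ s in t..t', f s) / (M (-lam) ^ 2 / 4) := by
            apply div_le_div_of_nonneg_left hnum _ hDsq_ge
            have := hMpos (-lam); positivity
        _ = 4 * ((M lam / M (-lam)) * (∫ s in t..t', f s)) := by
            field_simp
        _ ≤ 4 * (rexp (2*C-(3/4)*lam) * J T) := by
            have h1 : M lam / M (-lam) * (∫ s in t..t', f s)
                ≤ rexp (2*C-(3/4)*lam) * J T :=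
              mul_le_mul hr hI2le hI2nonneg (exp_nonneg _)
            linarith
        _ = 4 * rexp (2*C - (3/4)*lam) * J T := by ring
    have hminT : -lam ≤ t := by linarith
    have hI3 : (∫ s in (-lam)..t, f s) = J t - J (-lam) := hsplit lam t hminT
    have hJtT : J t ≤ J T :=
      setIntegral_mono_set (hintIic T) (Eventually.of_forall fun s => (hfpos s).le)
        (HasSubset.Subset.eventuallyLE (Iic_subset_Iic.2 (by linarith)))
    have hJlam : J (-lam) ≤ rexp (2*C) * ((4:ℝ)/3) * rexp ((3/4) * (-lam)) :=
      hJtail _ (by linarith)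
    have key3 : |M (-lam) ^ 2 * (∫ s in (-lam)..t, f s) / (M lam - M (-lam)) ^ 2 - J t|
        ≤ 8 * rexp (2*C - (3/4)*lam) * J T
          + 4 * (rexp (2*C) * ((4:ℝ)/3) * rexp ((3/4) * (-lam))) := by
      rw [hI3]
      have hA : M (-lam)^2 * (J t - J (-lam)) / (M lam - M (-lam))^2 - J t
          = (M (-lam)^2 / (M lam - M (-lam))^2 - 1) * J t
            - (M (-lam)^2 / (M lam - M (-lam))^2) * J (-lam) := by ring
      rw [hA]
      have h1 := abs_sub ((M (-lam)^2 / (M lam - M (-lam))^2 - 1) * J t)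
        ((M (-lam)^2 / (M lam - M (-lam))^2) * J (-lam))
      refine h1.trans ?_
      rw [abs_of_nonneg (mul_nonneg (by linarith [hfrac1]) (hJnonneg t)),
        abs_of_nonneg (mul_nonneg (by positivity) (hJnonneg _))]
      have h2 : (M (-lam)^2 / (M lam - M (-lam))^2 - 1) * J t
          ≤ 8 * rexp (2*C-(3/4)*lam) * J T :=
        mul_le_mul hfrac hJtT (hJnonneg t) (by positivity)
      have h3 : (M (-lam)^2 / (M lam - M (-lam))^2) * J (-lam)
          ≤ 4 * (rexp (2*C) * ((4:ℝ)/3) * rexp ((3/4) * (-lam))) := by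
        apply mul_le_mul hQdiv hJlam (hJnonneg _) (by norm_num)
      linarith
    -- assembling
    rw [min_eq_left htt']
    have hJt : (∫ s in Iic t, f s) = J t := by rw [hJdef]
    rw [hJt]
    have hKt : M t ≤ K := hKM t ⟨ht, by linarith⟩
    have hKt' : M t' ≤ K := hKM t' ⟨by linarith, ht'⟩
    have hRW : (M t * M t' / (M lam - M (-lam)) ^ 2) *
          (M lam ^ 2 * (∫ s in t'..lam, f s) +
           M lam * M (-lam) * (∫ s in t..t', f s) +
           M (-lam) ^ 2 * (∫ s in (-lam)..t, f s))
          - M t * M t' * J t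
        = M t * M t' * ((M lam ^ 2 * (∫ s in t'..lam, f s) / (M lam - M (-lam)) ^ 2)
            + (M lam * M (-lam) * (∫ s in t..t', f s) / (M lam - M (-lam)) ^ 2)
            + (M (-lam) ^ 2 * (∫ s in (-lam)..t, f s) / (M lam - M (-lam)) ^ 2 - J t)) := by
      ring
    rw [hRW, abs_mul, abs_of_pos (mul_pos (hMpos t) (hMpos t'))]
    have hA0 : 0 ≤ M lam ^ 2 * (∫ s in t'..lam, f s) / (M lam - M (-lam)) ^ 2 :=
      div_nonneg (mul_nonneg (sq_nonneg _) hI1nonneg) (sq_nonneg _)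
    have hB0 : 0 ≤ M lam * M (-lam) * (∫ s in t..t', f s) / (M lam - M (-lam)) ^ 2 :=
      div_nonneg (mul_nonneg (mul_nonneg (hMpos _).le (hMpos _).le) hI2nonneg) (sq_nonneg _)
    have hinner : |(M lam ^ 2 * (∫ s in t'..lam, f s) / (M lam - M (-lam)) ^ 2)
            + (M lam * M (-lam) * (∫ s in t..t', f s) / (M lam - M (-lam)) ^ 2)
            + (M (-lam) ^ 2 * (∫ s in (-lam)..t, f s) / (M lam - M (-lam)) ^ 2 - J t)|
        ≤ (16/5) * rexp (6*C + T/2) * rexp (-(1/4) * lam)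
          + 4 * rexp (2*C - (3/4)*lam) * J T
          + (8 * rexp (2*C - (3/4)*lam) * J T
            + 4 * (rexp (2*C) * ((4:ℝ)/3) * rexp ((3/4) * (-lam)))) := by
      refine (abs_add_le _ _).trans ?_
      rw [abs_of_nonneg (add_nonneg hA0 hB0)]
      have := key3
      linarith [key1, key2, key3]
    have hMtK : M t * M t' ≤ K ^ 2 := by
      have := mul_le_mul hKt hKt' (hMpos t').le hKpos.le
      nlinarith
    calc M t * M t' * |(M lam ^ 2 * (∫ s in t'..lam, f s) / (M lam - M (-lam)) ^ 2)
            + (M lam * M (-lam) * (∫ s in t..t', f s) / (M lam - M (-lam)) ^ 2)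
            + (M (-lam) ^ 2 * (∫ s in (-lam)..t, f s) / (M lam - M (-lam)) ^ 2 - J t)|
        ≤ K ^ 2 * |(M lam ^ 2 * (∫ s in t'..lam, f s) / (M lam - M (-lam)) ^ 2)
            + (M lam * M (-lam) * (∫ s in t..t', f s) / (M lam - M (-lam)) ^ 2)
            + (M (-lam) ^ 2 * (∫ s in (-lam)..t, f s) / (M lam - M (-lam)) ^ 2 - J t)| :=
          mul_le_mul_of_nonneg_right hMtK (abs_nonneg _)
      _ ≤ K ^ 2 * ((16/5) * rexp (6*C + T/2) * rexp (-(1/4) * lam)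
          + 4 * rexp (2*C - (3/4)*lam) * J T
          + (8 * rexp (2*C - (3/4)*lam) * J T
            + 4 * (rexp (2*C) * ((4:ℝ)/3) * rexp ((3/4) * (-lam))))) :=
          mul_le_mul_of_nonneg_left hinner (by positivity)
      _ = φ lam := by
          rw [hφdef]
          have e1 : rexp (2*C - (3/4)*lam) = rexp (2*C) * rexp (-(3/4)*lam) := by
            rw [← Real.exp_add]; congr 1; ring
          have e2 : rexp ((3/4) * (-lam)) = rexp (-(3/4)*lam) := by congr 1; ring
          rw [e1, e2]
          ring
  -- conclude uniform convergence
  have hexp1 : Tendsto (fun lam : ℝ => rexp (-(1/4) * lam)) atTop (nhds 0) := by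
    apply Real.tendsto_exp_atBot.comp
    exact Tendsto.const_mul_atTop_of_neg (by norm_num : -(1/4 : ℝ) < 0) tendsto_id
  have hexp2 : Tendsto (fun lam : ℝ => rexp (-(3/4) * lam)) atTop (nhds 0) := by
    apply Real.tendsto_exp_atBot.comp
    exact Tendsto.const_mul_atTop_of_neg (by norm_num : -(3/4 : ℝ) < 0) tendsto_id
  have hφ0 : Tendsto φ atTop (nhds 0) := by
    rw [hφdef]
    have h := (((tendsto_const_nhds (x := (16/5) * rexp (6 * C + T / 2))).mul hexp1).add
      ((tendsto_const_nhds (x := 4 * J T + 16/3 + 8 * J T)).mul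
        ((tendsto_const_nhds (x := rexp (2*C))).mul hexp2))).const_mul (K ^ 2)
    simpa using h.congr (fun lam => by ring)
  rw [Metric.tendstoUniformlyOn_iff]
  intro ε hε
  have hev : ∀ᶠ lam in atTop, φ lam < ε := hφ0.eventually (gt_mem_nhds hε)
  filter_upwards [hev, eventually_ge_atTop lam0] with lam h1 h2
  intro p hp
  rw [Real.dist_eq, abs_sub_comm]
  exact lt_of_le_of_lt (key lam h2 p.1 p.2 hp.1 hp.2.1 hp.2.2) h1


lemma good_omega {Ω : Type*} (Bp Bm : ℝ → Ω → ℝ) (ω : Ω)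
    (hcp : ContinuousOn (fun t => Bp t ω) (Set.Ici 0))
    (hcm : ContinuousOn (fun t => Bm t ω) (Set.Ici 0))
    (h0p : Bp 0 ω = 0) (h0m : Bm 0 ω = 0)
    (Cp : ℝ) (hCp : 0 ≤ Cp) (hbp : ∀ u : ℝ, 0 ≤ u → |Bp u ω| ≤ u / 8 + Cp)
    (Cm : ℝ) (hCm : 0 ≤ Cm) (hbm : ∀ u : ℝ, 0 ≤ u → |Bm u ω| ≤ u / 8 + Cm) :
    (∀ t : ℝ, IntegrableOn (fun s => 1 / (gBM Bp Bm s ω) ^ 2) (Set.Iic t) volume) ∧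
    ∀ T : ℝ, 0 < T →
      TendstoUniformlyOn (fun (lam : ℝ) (p : ℝ × ℝ) => Gker Bp Bm lam p.1 p.2 ω)
        (fun p => GkerInf Bp Bm p.1 p.2 ω) Filter.atTop
        {p : ℝ × ℝ | -T ≤ p.1 ∧ p.1 ≤ p.2 ∧ p.2 ≤ T} := by
  set bf : ℝ → ℝ := fun t => twoSidedBM Bp Bm t ω with hbf
  have hbeq : bf = fun t => (fun u => Bp u ω) (max t 0) + (fun u => Bm u ω) (max (-t) 0) := by
    funext t
    rw [hbf]
    simp only [twoSidedBM]
    rcases le_or_gt 0 t with h | h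
    · rw [if_pos h, max_eq_left h, max_eq_right (by linarith : -t ≤ 0), h0m, add_zero]
    · rw [if_neg (not_le.2 h), max_eq_right h.le, max_eq_left (by linarith : (0:ℝ) ≤ -t), h0p,
        zero_add]
  have hbcont : Continuous bf := by
    rw [hbeq]
    apply Continuous.add
    · exact hcp.comp_continuous (continuous_id.max continuous_const)
        (fun x => Set.mem_Ici.2 (le_max_right _ _))
    · exact hcm.comp_continuous (continuous_id.neg.max continuous_const)
        (fun x => Set.mem_Ici.2 (le_max_right _ _))
  have hblin : ∀ t : ℝ, |bf t| ≤ |t| / 8 + max Cp Cm := by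
    intro t
    rw [hbf]
    simp only [twoSidedBM]
    rcases le_or_gt 0 t with h | h
    · rw [if_pos h, abs_of_nonneg h]
      refine (hbp t h).trans ?_
      have := le_max_left Cp Cm
      linarith
    · rw [if_neg (not_le.2 h), abs_of_neg h]
      refine (hbm (-t) (by linarith)).trans ?_
      have := le_max_right Cp Cm
      linarith
  have hdet := det_part bf hbcont (max Cp Cm) (le_trans hCp (le_max_left _ _)) hblin
    (fun s => gBM Bp Bm s ω) (fun t => rfl)
  exact hdet

/-- Almost surely, `∫_{-∞}^t M_s^{-2} ds < ∞` for every `t`, and the finite-volume kernels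
`𝒢^{(λ)}` converge uniformly on compacts to the infinite-volume kernel `𝒢^{(∞)}`
as `λ → ∞`. -/
theorem kernel_infinite_volume_limit
    {Ω : Type*} [MeasurableSpace Ω] (P : Measure Ω) [IsProbabilityMeasure P]
    (Bp Bm : ℝ → Ω → ℝ) (hBp : IsStdBrownian P Bp) (hBm : IsStdBrownian P Bm)
    (hIndep : IndepFun (fun ω => fun t : ℝ => Bp t ω) (fun ω => fun t : ℝ => Bm t ω) P) :
    (∀ᵐ ω ∂P, ∀ t : ℝ,
      IntegrableOn (fun s => 1 / (gBM Bp Bm s ω) ^ 2) (Set.Iic t) volume) ∧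
    (∀ T : ℝ, 0 < T → ∀ᵐ ω ∂P,
      TendstoUniformlyOn (fun (lam : ℝ) (p : ℝ × ℝ) => Gker Bp Bm lam p.1 p.2 ω)
        (fun p => GkerInf Bp Bm p.1 p.2 ω) Filter.atTop
        {p : ℝ × ℝ | -T ≤ p.1 ∧ p.1 ≤ p.2 ∧ p.2 ≤ T}) := by
  have hae : ∀ᵐ ω ∂P,
      (∀ t : ℝ, IntegrableOn (fun s => 1 / (gBM Bp Bm s ω) ^ 2) (Set.Iic t) volume) ∧
      ∀ T : ℝ, 0 < T →
        TendstoUniformlyOn (fun (lam : ℝ) (p : ℝ × ℝ) => Gker Bp Bm lam p.1 p.2 ω)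
          (fun p => GkerInf Bp Bm p.1 p.2 ω) Filter.atTop
          {p : ℝ × ℝ | -T ≤ p.1 ∧ p.1 ≤ p.2 ∧ p.2 ≤ T} := by
    filter_upwards [hBp.2.1, hBm.2.1, linear_growth P Bp hBp, linear_growth P Bm hBm]
      with ω h0p h0m hp hm
    obtain ⟨Cp, hCp, hbp⟩ := hp
    obtain ⟨Cm, hCm, hbm⟩ := hm
    exact good_omega Bp Bm ω (hBp.2.2.1 ω) (hBm.2.2.1 ω) h0p h0m Cp hCp hbp Cm hCm hbm
  constructor
  · filter_upwards [hae] with ω h using h.1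
  · intro T hT
    filter_upwards [hae] with ω h using h.2 T hT
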